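/- (Uniform lower bound on the numerator term for discrete priors.) Fix r > 0 and b ∈ (0,1]. There exist constants C > 0 and η₀ ∈ (0,1) (depending only on r and b) such that for all η ∈ (0, η₀), with the discrete sparse prior π_D[η; b, r] and Z ~ N(0,1): (i) for every θ ≥ λ, writing θ = λ(α_l + ω) with l ≥ 1 and ω ∈ [0, α̇_l), one has E log N_{θ,v}(Z) ≥ (λ²/2) · max( n(l,ω), ň(l,ω) ) − C; and (ii) for 0 ≤ θ < λ, E log N_{θ,v}(Z) ≥ 0. Here N_{θ,v}(z) = 1 + (η/(1−η)) ∫ exp( μz/√v + μθ/v − μ²/(2v) ) ν(dμ) with ν the normalized nonzero part of π_D[η; b, r]. -/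

import Mathlib

/-!
Each atom `μ_m = λα_m` of the prior bounds `N_{θ,v}(z)` from below by its own term, whose
logarithm is affine in `z`:
`log N_{θ,v}(z) ≥ log(η/(1-η) · c(η) ζ^{β_m-1}) + μ_m θ/v - μ_m²/(2v) + μ_m z/√v`.
As `E Z = 0`, `E log N_{θ,v}(Z)` is at least the constant term. For `θ = λ(α_l + ω)` this is
`(λ²/2) n(l,ω)` when `m = l` and, because `β_{l+1} = β_l + α̇_l²`, `(λ²/2) ň(l,ω)` when `m = l + 1`,
up to `log c(η) - log(1-η)`, which is bounded below for `η < 1/2`. For `θ < λ` use `N ≥ 1`.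
Since `ν` is finite, `0 ≤ log N_{θ,v}(z) ≲ 1 + z²`, so `log N_{θ,v}(Z)` is integrable and the
Bochner integral `ElogN` is the true expectation.
-/

open MeasureTheory ProbabilityTheory Real Filter Set

noncomputable section

/-- Density of the `N(m, v)` distribution (variance `v`). -/
def gpdf (m v z : ℝ) : ℝ := gaussianPDFReal m v.toNNReal z

/-- The `N(m, v)` measure on `ℝ`. -/
def gmeas (m v : ℝ) : Measure ℝ := gaussianReal m v.toNNReal

/-- Density of `N_n(θ, v I)` on `ℝⁿ`. -/
def gpdfN (n : ℕ) (θ : Fin n → ℝ) (v : ℝ) (z : Fin n → ℝ) : ℝ :=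
  ∏ i, gpdf (θ i) v (z i)

/-- The `N_n(θ, v I)` measure on `ℝⁿ`. -/
def gmeasN (n : ℕ) (θ : Fin n → ℝ) (v : ℝ) : Measure (Fin n → ℝ) :=
  Measure.pi (fun i => gmeas (θ i) v)

/-- Kullback-Leibler risk of a predictive density estimate `phat` (where `phat x` is the
estimated density of the future observation given past data `x`) in the model
`X ~ N_n(θ, I)`, `Y ~ N_n(θ, r I)`. -/
def klRisk (n : ℕ) (r : ℝ) (θ : Fin n → ℝ) (phat : (Fin n → ℝ) → (Fin n → ℝ) → ℝ) : ℝ :=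
  ∫ x, (∫ y, Real.log (gpdfN n θ r y / phat x y) ∂(gmeasN n θ r)) ∂(gmeasN n θ 1)

/-- Univariate Kullback-Leibler predictive risk. -/
def klRisk1 (r θ : ℝ) (phat : ℝ → ℝ → ℝ) : ℝ :=
  ∫ x, (∫ y, Real.log (gpdf θ r y / phat x y) ∂(gmeas θ r)) ∂(gmeas θ 1)

/-- `phat x` is a probability density for every `x`: a predictive density estimate. -/
def IsPredEst (n : ℕ) (phat : (Fin n → ℝ) → (Fin n → ℝ) → ℝ) : Prop :=
  ∀ x, (∀ y, 0 ≤ phat x y) ∧ ∫ y, phat x y = 1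

/-- `ℓ₀`-sparse parameter set. -/
def Theta (n s : ℕ) : Set (Fin n → ℝ) := {θ | {i | θ i ≠ 0}.ncard ≤ s}

/-- Bounded sparse parameter set. -/
def ThetaB (n s : ℕ) (t : ℝ) : Set (Fin n → ℝ) :=
  {θ | {i | θ i ≠ 0}.ncard ≤ s ∧ ∀ i, |θ i| ≤ t}

/-- Minimax Kullback-Leibler risk over a parameter set. -/
def minimaxRisk (n : ℕ) (r : ℝ) (Θ : Set (Fin n → ℝ)) : ℝ :=
  ⨅ phat : {p : (Fin n → ℝ) → (Fin n → ℝ) → ℝ // IsPredEst n p}, ⨆ θ ∈ Θ, klRisk n r θ phat.1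

/-- Univariate Bayes predictive density for a prior `pr` on `ℝ`. -/
def bayesPDE (r : ℝ) (pr : Measure ℝ) (x y : ℝ) : ℝ :=
  (∫ μ, gpdf μ r y * gpdf μ 1 x ∂pr) / (∫ μ, gpdf μ 1 x ∂pr)

/-- The product (coordinatewise) Bayes predictive density estimate built from prior `pr`. -/
def bayesPDEprod (n : ℕ) (r : ℝ) (pr : Measure ℝ) :
    (Fin n → ℝ) → (Fin n → ℝ) → ℝ :=
  fun x y => ∏ i, bayesPDE r pr (x i) (y i)

/-- oracle variance `v = r/(1+r)`. -/
def vv (r : ℝ) : ℝ := r / (1 + r)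

/-- `λ(η) = √(2 v log η⁻¹)`. -/
def lam (r η : ℝ) : ℝ := Real.sqrt (2 * vv r * Real.log η⁻¹)

/-- The sparse prior `(1-η)δ₀ + ην`. -/
def sparsePrior (η : ℝ) (ν : Measure ℝ) : Measure ℝ :=
  ENNReal.ofReal (1 - η) • Measure.dirac 0 + ENNReal.ofReal η • ν

/-- `N_{θ,v}(z) = 1 + (η/(1-η)) ∫ exp(μz/√v + μθ/v - μ²/(2v)) ν(dμ)`. -/
def Nfun (η : ℝ) (ν : Measure ℝ) (θ v z : ℝ) : ℝ :=
  1 + η / (1 - η) * ∫ μ, Real.exp (μ * z / Real.sqrt v + μ * θ / v - μ ^ 2 / (2 * v)) ∂ν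

/-- `E log N_{θ,v}(Z)` for `Z ~ N(0,1)`. -/
def ElogN (η : ℝ) (ν : Measure ℝ) (θ v : ℝ) : ℝ :=
  ∫ z, Real.log (Nfun η ν θ v z) ∂(gmeas 0 1)

/-- `K = 1 + ⌈2 b^{-3/2}⌉`. -/
def KD (b : ℝ) : ℕ := 1 + ⌈2 * b ^ (-(3 : ℝ) / 2)⌉₊

/-- Spacing sequence `α_j`: `α_j = 1 + b(j-1)` for `1 ≤ j ≤ K`, `α_j = α_K + j - K` beyond. -/
def alphaD (b : ℝ) (j : ℕ) : ℝ :=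
  if j ≤ KD b then 1 + b * ((j : ℝ) - 1)
  else 1 + b * ((KD b : ℝ) - 1) + ((j : ℝ) - (KD b : ℝ))

/-- Decay sequence `β_j`: same as `α_j` with `b` replaced by `b²`. -/
def betaD (b : ℝ) (j : ℕ) : ℝ :=
  if j ≤ KD b then 1 + b ^ 2 * ((j : ℝ) - 1)
  else 1 + b ^ 2 * ((KD b : ℝ) - 1) + ((j : ℝ) - (KD b : ℝ))

/-- Increments `α̇_j = α_{j+1} - α_j`. -/
def alphadot (b : ℝ) (j : ℕ) : ℝ := alphaD b (j + 1) - alphaD b j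

/-- Normalizing constant `c(η)` of the discrete sparse prior, determined by
`1/(2c(η)) = (1-η^{b²vK})/(1-η^{b²v}) + η^{b²v(K-1)+v}/(1-η^v)`. -/
def cD (r b η : ℝ) : ℝ :=
  (2 * ((1 - η ^ (b ^ 2 * vv r * (KD b : ℝ))) / (1 - η ^ (b ^ 2 * vv r))
      + η ^ (b ^ 2 * vv r * ((KD b : ℝ) - 1) + vv r) / (1 - η ^ vv r)))⁻¹

/-- The normalized nonzero part `ν` of the discrete sparse prior `π_D[η; b, r]`:
atoms `±μ_j = ±λ α_j` with weights `c(η) ζ^{β_j - 1}` (`ζ = η^v`), for `j ≥ 1`. -/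
def nuD (r b η : ℝ) : Measure ℝ :=
  Measure.sum (fun j : ℕ =>
    ENNReal.ofReal (cD r b η * (η ^ vv r) ^ (betaD b (j + 1) - 1)) •
      (Measure.dirac (lam r η * alphaD b (j + 1)) +
        Measure.dirac (-(lam r η * alphaD b (j + 1)))))

/-- `n(l,ω) = v⁻¹(α_l² + 2α_l ω) - β_l - r⁻¹`. -/
def nSig (r b : ℝ) (l : ℕ) (ω : ℝ) : ℝ :=
  (vv r)⁻¹ * (alphaD b l ^ 2 + 2 * alphaD b l * ω) - betaD b l - r⁻¹

/-- `ň(l,ω) = n(l,ω) + 2v⁻¹ α̇_l ω - (1 + v⁻¹) α̇_l²`. -/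
def nSigCheck (r b : ℝ) (l : ℕ) (ω : ℝ) : ℝ :=
  nSig r b l ω + 2 * (vv r)⁻¹ * alphadot b l * ω - (1 + (vv r)⁻¹) * alphadot b l ^ 2

open scoped NNReal

lemma integrable_gaussianReal_of_abs_le_add_sq {m : ℝ} {s : ℝ≥0} {f : ℝ → ℝ}
    (hf : AEStronglyMeasurable f (gaussianReal m s)) {c : ℝ} (hbound : ∀ z, |f z| ≤ c + z ^ 2) :
    Integrable f (gaussianReal m s) :=
  ((integrable_const c).add (memLp_id_gaussianReal 2).integrable_sq).mono' hf
    (ae_of_all _ fun z => (Real.norm_eq_abs (f z)).trans_le (hbound z))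

lemma gmeas_zero_one : gmeas 0 1 = gaussianReal 0 1 := by
  simp [gmeas]

lemma vv_pos {r : ℝ} (hr : 0 < r) : 0 < vv r := div_pos hr (by linarith)

def NfunIntegrand (θ v z μ : ℝ) : ℝ :=
  Real.exp (μ * z / Real.sqrt v + μ * θ / v - μ ^ 2 / (2 * v))

lemma Nfun_eq (η : ℝ) (ν : Measure ℝ) (θ v z : ℝ) :
    Nfun η ν θ v z = 1 + η / (1 - η) * ∫ μ, NfunIntegrand θ v z μ ∂ν := rfl

lemma continuous_NfunIntegrand_uncurry (θ v : ℝ) :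
    Continuous (fun p : ℝ × ℝ => NfunIntegrand θ v p.1 p.2) := by
  unfold NfunIntegrand; fun_prop

lemma NfunIntegrand_le {v : ℝ} (hv : 0 < v) (θ z μ : ℝ) :
    NfunIntegrand θ v z μ ≤ Real.exp ((z + θ / Real.sqrt v) ^ 2 / 2) := by
  obtain ⟨s, hs, rfl⟩ : ∃ s, 0 < s ∧ v = s ^ 2 :=
    ⟨Real.sqrt v, Real.sqrt_pos.2 hv, (Real.sq_sqrt hv.le).symm⟩
  refine Real.exp_le_exp.2 ?_
  rw [Real.sqrt_sq hs.le]
  field_simp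
  nlinarith [sq_nonneg (z * s + θ - μ)]

lemma integrable_NfunIntegrand {v : ℝ} (hv : 0 < v) (θ z : ℝ) (ν : Measure ℝ)
    [IsFiniteMeasure ν] :
    Integrable (NfunIntegrand θ v z) ν :=
  (integrable_const _).mono'
    ((continuous_NfunIntegrand_uncurry θ v).comp (Continuous.prodMk_right z)).aestronglyMeasurable
    (ae_of_all _ fun μ => (Real.norm_of_nonneg (Real.exp_nonneg _)).trans_le
      (NfunIntegrand_le hv θ z μ))

lemma one_le_Nfun {η : ℝ} (hη0 : 0 ≤ η) (hη1 : η ≤ 1) (ν : Measure ℝ) (θ v z : ℝ) :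
    1 ≤ Nfun η ν θ v z :=
  le_add_of_nonneg_right <| mul_nonneg (div_nonneg hη0 (sub_nonneg.2 hη1))
    (integral_nonneg fun _ => Real.exp_nonneg _)

lemma ElogN_nonneg {η : ℝ} (hη0 : 0 ≤ η) (hη1 : η ≤ 1) (ν : Measure ℝ) (θ v : ℝ) :
    0 ≤ ElogN η ν θ v :=
  integral_nonneg fun z => Real.log_nonneg (one_le_Nfun hη0 hη1 ν θ v z)

lemma Nfun_le {η v : ℝ} (hη0 : 0 ≤ η) (hη1 : η < 1) (hv : 0 < v) (ν : Measure ℝ)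
    [IsFiniteMeasure ν] (θ z : ℝ) :
    Nfun η ν θ v z
      ≤ (1 + η / (1 - η) * ν.real univ) * Real.exp ((z + θ / Real.sqrt v) ^ 2 / 2) := by
  have hbound : ∫ μ, NfunIntegrand θ v z μ ∂ν
      ≤ ν.real univ * Real.exp ((z + θ / Real.sqrt v) ^ 2 / 2) := by
    simpa using integral_mono (integrable_NfunIntegrand hv θ z ν) (integrable_const _)
      (NfunIntegrand_le hv θ z)
  have hc : 0 ≤ η / (1 - η) := div_nonneg hη0 (by linarith)
  have hexp : 1 ≤ Real.exp ((z + θ / Real.sqrt v) ^ 2 / 2) := Real.one_le_exp (by positivity)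
  rw [Nfun_eq, add_mul, one_mul, mul_assoc]
  gcongr

lemma measurable_Nfun (η : ℝ) (ν : Measure ℝ) [SFinite ν] (θ v : ℝ) :
    Measurable (Nfun η ν θ v) :=
  measurable_const.add <| ((continuous_NfunIntegrand_uncurry θ v).stronglyMeasurable
    |>.integral_prod_right'.measurable).const_mul _

lemma integrable_log_Nfun {η v : ℝ} (hη0 : 0 ≤ η) (hη1 : η < 1) (hv : 0 < v) (ν : Measure ℝ)
    [IsFiniteMeasure ν] (θ m : ℝ) (s : ℝ≥0) :
    Integrable (fun z => Real.log (Nfun η ν θ v z)) (gaussianReal m s) := by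
  set M := 1 + η / (1 - η) * ν.real univ
  have hM : 1 ≤ M := le_add_of_nonneg_right
    (mul_nonneg (div_nonneg hη0 (by linarith)) measureReal_nonneg)
  refine integrable_gaussianReal_of_abs_le_add_sq
    (measurable_Nfun η ν θ v).log.aestronglyMeasurable (c := Real.log M + (θ / Real.sqrt v) ^ 2)
    fun z => ?_
  rw [abs_of_nonneg (Real.log_nonneg (one_le_Nfun hη0 hη1.le ν θ v z))]
  calc Real.log (Nfun η ν θ v z)
      ≤ Real.log (M * Real.exp ((z + θ / Real.sqrt v) ^ 2 / 2)) :=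
        Real.log_le_log (by linarith [one_le_Nfun hη0 hη1.le ν θ v z]) (Nfun_le hη0 hη1 hv ν θ z)
    _ = Real.log M + (z + θ / Real.sqrt v) ^ 2 / 2 := by
        rw [Real.log_mul (by positivity) (Real.exp_pos _).ne', Real.log_exp]
    _ ≤ Real.log M + (θ / Real.sqrt v) ^ 2 + z ^ 2 := by
        nlinarith [sq_nonneg (z - θ / Real.sqrt v)]

lemma log_Nfun_ge_of_smul_dirac_le {η v w a : ℝ} (hη0 : 0 < η) (hη1 : η < 1) (hv : 0 < v)
    (hw : 0 < w) {ν : Measure ℝ} [IsFiniteMeasure ν]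
    (hν : ENNReal.ofReal w • Measure.dirac a ≤ ν) (θ z : ℝ) :
    Real.log (η / (1 - η) * w) + (a * θ / v - a ^ 2 / (2 * v)) + a / Real.sqrt v * z
      ≤ Real.log (Nfun η ν θ v z) := by
  have hc : 0 < η / (1 - η) := div_pos hη0 (by linarith)
  have hatom : w * NfunIntegrand θ v z a ≤ ∫ μ, NfunIntegrand θ v z μ ∂ν := by
    calc w * NfunIntegrand θ v z a
        = ∫ μ, NfunIntegrand θ v z μ ∂(ENNReal.ofReal w • Measure.dirac a) := by
          rw [integral_smul_measure, integral_dirac, ENNReal.toReal_ofReal hw.le, smul_eq_mul]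
      _ ≤ ∫ μ, NfunIntegrand θ v z μ ∂ν :=
          integral_mono_measure hν (ae_of_all _ fun _ => Real.exp_nonneg _)
            (integrable_NfunIntegrand hv θ z ν)
  have hN : η / (1 - η) * w * NfunIntegrand θ v z a ≤ Nfun η ν θ v z := by
    rw [Nfun_eq, mul_assoc]
    nlinarith [mul_le_mul_of_nonneg_left hatom hc.le]
  calc Real.log (η / (1 - η) * w) + (a * θ / v - a ^ 2 / (2 * v)) + a / Real.sqrt v * z
      = Real.log (η / (1 - η) * w * NfunIntegrand θ v z a) := by
        rw [NfunIntegrand, Real.log_mul (by positivity) (Real.exp_pos _).ne', Real.log_exp]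
        ring
    _ ≤ Real.log (Nfun η ν θ v z) := Real.log_le_log (by unfold NfunIntegrand; positivity) hN

lemma ElogN_ge_of_smul_dirac_le {η v w a : ℝ} (hη0 : 0 < η) (hη1 : η < 1) (hv : 0 < v)
    (hw : 0 < w) {ν : Measure ℝ} [IsFiniteMeasure ν]
    (hν : ENNReal.ofReal w • Measure.dirac a ≤ ν) (θ : ℝ) :
    Real.log (η / (1 - η) * w) + (a * θ / v - a ^ 2 / (2 * v)) ≤ ElogN η ν θ v := by
  set A := Real.log (η / (1 - η) * w) + (a * θ / v - a ^ 2 / (2 * v))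
  have hid : Integrable (fun z : ℝ => z) (gaussianReal 0 1) :=
    (memLp_id_gaussianReal 1).integrable le_rfl
  have haffine : Integrable (fun z => A + a / Real.sqrt v * z) (gaussianReal 0 1) :=
    (integrable_const A).add (hid.const_mul _)
  calc A = ∫ z, (A + a / Real.sqrt v * z) ∂(gaussianReal 0 1) := by
        rw [integral_add (integrable_const A) (hid.const_mul _), integral_const_mul,
          integral_id_gaussianReal]
        simp
    _ ≤ ElogN η ν θ v := by
        rw [ElogN, gmeas_zero_one]
        exact integral_mono haffine (integrable_log_Nfun hη0.le hη1 hv ν θ 0 1)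
          (log_Nfun_ge_of_smul_dirac_le hη0 hη1 hv hw hν θ)

lemma betaD_succ (b : ℝ) (l : ℕ) : betaD b (l + 1) = betaD b l + alphadot b l ^ 2 := by
  unfold betaD alphadot alphaD
  rcases lt_trichotomy l (KD b) with hl | rfl | hl
  · simp only [show l + 1 ≤ KD b by omega, hl.le, if_true]
    push_cast; ring
  · simp only [show ¬(KD b + 1 ≤ KD b) by omega, le_refl, if_true, if_false]
    push_cast; ring
  · simp only [show ¬(l + 1 ≤ KD b) by omega, show ¬(l ≤ KD b) by omega, if_false]
    push_cast; ring

lemma sq_mul_le_betaD_succ_sub_one {b : ℝ} (hb : b ^ 2 ≤ 1) (j : ℕ) :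
    b ^ 2 * j ≤ betaD b (j + 1) - 1 := by
  unfold betaD
  split_ifs with hj
  · push_cast; linarith
  · have hK : (KD b : ℝ) ≤ j := by exact_mod_cast (show KD b ≤ j by omega)
    push_cast
    nlinarith

lemma inv_one_sub_rpow_le_of_le_half {η p : ℝ} (hη0 : 0 ≤ η) (hη : η ≤ 1 / 2) (hp : 0 < p) :
    (1 - η ^ p)⁻¹ ≤ (1 - 2⁻¹ ^ p)⁻¹ :=
  inv_anti₀ (sub_pos.2 (Real.rpow_lt_one (by norm_num) (by norm_num) hp))
    (sub_le_sub_left (Real.rpow_le_rpow hη0 (by linarith) hp.le) 1)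

lemma exists_pos_le_cD {r b : ℝ} (hr : 0 < r) (hb : 0 < b) :
    ∃ c₀ > 0, ∀ η ∈ Ioo (0 : ℝ) (1 / 2), c₀ ≤ cD r b η := by
  have hv := vv_pos hr
  have hbv : 0 < b ^ 2 * vv r := by positivity
  have hgeom {p : ℝ} (hp : 0 < p) : 0 < (1 - (2 : ℝ)⁻¹ ^ p)⁻¹ :=
    inv_pos.2 (sub_pos.2 (Real.rpow_lt_one (by norm_num) (by norm_num) hp))
  refine ⟨(2 * ((1 - (2 : ℝ)⁻¹ ^ (b ^ 2 * vv r))⁻¹ + (1 - (2 : ℝ)⁻¹ ^ vv r)⁻¹))⁻¹,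
    by have := hgeom hbv; have := hgeom hv; positivity, fun η ⟨hη0, hη⟩ => ?_⟩
  have hK : 1 ≤ (KD b : ℝ) := by exact_mod_cast Nat.le_add_right 1 _
  have hpow_lt {p : ℝ} (hp : 0 < p) : η ^ p < 1 := Real.rpow_lt_one hη0.le (by linarith) hp
  have hfirst : 0 < (1 - η ^ (b ^ 2 * vv r * (KD b : ℝ))) / (1 - η ^ (b ^ 2 * vv r)) :=
    div_pos (sub_pos.2 (hpow_lt (by positivity))) (sub_pos.2 (hpow_lt hbv))
  have hsecond : 0 ≤ η ^ (b ^ 2 * vv r * ((KD b : ℝ) - 1) + vv r) / (1 - η ^ vv r) :=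
    div_nonneg (Real.rpow_nonneg hη0.le _) (sub_pos.2 (hpow_lt hv)).le
  refine inv_anti₀ (by positivity) (mul_le_mul_of_nonneg_left (add_le_add ?_ ?_) zero_le_two)
  · calc _ ≤ 1 / (1 - η ^ (b ^ 2 * vv r)) :=
          div_le_div_of_nonneg_right (by linarith [Real.rpow_nonneg hη0.le (b ^ 2 * vv r * KD b)])
            (sub_pos.2 (hpow_lt hbv)).le
      _ ≤ _ := (one_div _).trans_le (inv_one_sub_rpow_le_of_le_half hη0.le hη.le hbv)
  · calc _ ≤ 1 / (1 - η ^ vv r) :=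
          div_le_div_of_nonneg_right (Real.rpow_le_one hη0.le (by linarith) (by nlinarith))
            (sub_pos.2 (hpow_lt hv)).le
      _ ≤ _ := (one_div _).trans_le (inv_one_sub_rpow_le_of_le_half hη0.le hη.le hv)

lemma isFiniteMeasure_nuD {r b η : ℝ} (hr : 0 < r) (hb : 0 < b) (hb1 : b ≤ 1) (hη0 : 0 < η)
    (hη1 : η < 1) (hc : 0 ≤ cD r b η) : IsFiniteMeasure (nuD r b η) := by
  set ζ := η ^ vv r
  have hζ0 : 0 < ζ := Real.rpow_pos_of_pos hη0 _
  have hζ1 : ζ < 1 := Real.rpow_lt_one hη0.le hη1 (vv_pos hr)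
  set w : ℕ → ℝ := fun j => cD r b η * ζ ^ (betaD b (j + 1) - 1)
  have hw0 (j : ℕ) : 0 ≤ w j := mul_nonneg hc (Real.rpow_nonneg hζ0.le _)
  have hw_le (j : ℕ) : w j ≤ cD r b η * (ζ ^ b ^ 2) ^ j := by
    rw [← Real.rpow_mul_natCast hζ0.le]
    exact mul_le_mul_of_nonneg_left (Real.rpow_le_rpow_of_exponent_ge hζ0 hζ1.le
      (sq_mul_le_betaD_succ_sub_one (by nlinarith) j)) hc
  have hw : Summable w := Summable.of_nonneg_of_le hw0 hw_le <|
    (summable_geometric_of_lt_one (Real.rpow_nonneg hζ0.le _)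
      (Real.rpow_lt_one hζ0.le hζ1 (by positivity))).mul_left _
  constructor
  simp only [nuD, Measure.sum_apply _ MeasurableSet.univ, Measure.smul_apply, Measure.add_apply,
    measure_univ, smul_eq_mul]
  rw [ENNReal.tsum_mul_right, ← ENNReal.ofReal_tsum_of_nonneg hw0 hw]
  exact ENNReal.mul_lt_top ENNReal.ofReal_lt_top (by norm_num)

lemma smul_dirac_le_nuD (r b η : ℝ) (j : ℕ) :
    ENNReal.ofReal (cD r b η * (η ^ vv r) ^ (betaD b (j + 1) - 1)) •
      Measure.dirac (lam r η * alphaD b (j + 1)) ≤ nuD r b η :=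
  calc _ ≤ ENNReal.ofReal (cD r b η * (η ^ vv r) ^ (betaD b (j + 1) - 1)) •
        (Measure.dirac (lam r η * alphaD b (j + 1)) +
          Measure.dirac (-(lam r η * alphaD b (j + 1)))) := by
        gcongr; exact Measure.le_add_right le_rfl
    _ ≤ nuD r b η := Measure.le_sum _ j

/-- The lower bound on `E log N_{λt,v}(Z)` contributed by an atom at `λα` of weight `c(η) ζ^{β-1}`,
in units of `λ²/2` and up to `log c(η)`. For `t = α_l + ω` it is `n(l,ω)` for the atom `μ_l` and
`ň(l,ω)` for `μ_{l+1}`. -/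
def atomRate (r α β t : ℝ) : ℝ := (vv r)⁻¹ * (2 * α * t - α ^ 2) - β - r⁻¹

lemma nSig_eq_atomRate (r b : ℝ) (l : ℕ) (ω : ℝ) :
    nSig r b l ω = atomRate r (alphaD b l) (betaD b l) (alphaD b l + ω) := by
  unfold nSig atomRate; ring

lemma nSigCheck_eq_atomRate (r b : ℝ) (l : ℕ) (ω : ℝ) :
    nSigCheck r b l ω = atomRate r (alphaD b (l + 1)) (betaD b (l + 1)) (alphaD b l + ω) := by
  rw [betaD_succ, show alphaD b (l + 1) = alphaD b l + alphadot b l by unfold alphadot; ring]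
  unfold nSigCheck nSig atomRate; ring

lemma lam_sq_div_two_mul_atomRate {r η : ℝ} (hr : 0 < r) (hη0 : 0 < η) (hη1 : η ≤ 1)
    (α β t : ℝ) :
    lam r η ^ 2 / 2 * atomRate r α β t
      = Real.log η + (β - 1) * (vv r * Real.log η)
        + (lam r η * α * (lam r η * t) / vv r - (lam r η * α) ^ 2 / (2 * vv r)) := by
  have hv := vv_pos hr
  have hlam : lam r η ^ 2 = 2 * vv r * -Real.log η := by
    rw [lam, Real.sq_sqrt (mul_nonneg (by positivity) (Real.log_nonneg
      ((one_le_inv₀ hη0).2 hη1))), Real.log_inv]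
  have hrinv : r⁻¹ = (vv r)⁻¹ - 1 := by
    unfold vv; field_simp; ring
  rw [atomRate, hrinv, show (lam r η * α) ^ 2 = lam r η ^ 2 * α ^ 2 by ring,
    show lam r η * α * (lam r η * t) = lam r η ^ 2 * (α * t) by ring, hlam]
  field_simp
  ring

lemma ElogN_nuD_ge {r b η : ℝ} (hr : 0 < r) (hb : 0 < b) (hb1 : b ≤ 1) (hη0 : 0 < η)
    (hη1 : η < 1) (hc : 0 < cD r b η) {m : ℕ} (hm : 1 ≤ m) (t : ℝ) :
    lam r η ^ 2 / 2 * atomRate r (alphaD b m) (betaD b m) t + Real.log (cD r b η)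
      ≤ ElogN η (nuD r b η) (lam r η * t) (vv r) := by
  obtain ⟨j, rfl⟩ := Nat.exists_eq_add_of_le' hm
  have hv := vv_pos hr
  have hζ : 0 < η ^ vv r := Real.rpow_pos_of_pos hη0 _
  have := isFiniteMeasure_nuD hr hb hb1 hη0 hη1 hc.le
  have hatom := ElogN_ge_of_smul_dirac_le hη0 hη1 hv (mul_pos hc (Real.rpow_pos_of_pos hζ _))
    (smul_dirac_le_nuD r b η j) (lam r η * t)
  rw [Real.log_mul (div_pos hη0 (by linarith)).ne' (by positivity),
    Real.log_div hη0.ne' (by linarith), Real.log_mul hc.ne' (by positivity), Real.log_rpow hζ,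
    Real.log_rpow hη0] at hatom
  rw [lam_sq_div_two_mul_atomRate hr hη0 hη1.le]
  linarith [Real.log_nonpos (by linarith) (by linarith : 1 - η ≤ 1)]

/-- Lemma 2.2 (lower bounds, numerator part): uniformly in `η` small and
`θ = λ(α_l + ω) ≥ λ`, `E log N_{θ,v}(Z) ≥ (λ²/2) max(n(l,ω), ň(l,ω)) + O(1)`,
and `E log N_{θ,v}(Z) ≥ 0` for `0 ≤ θ < λ`. -/
theorem discrete_prior_N_lower_bound (r b : ℝ) (hr : 0 < r) (hb : b ∈ Set.Ioc (0 : ℝ) 1) :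
    ∃ C > (0 : ℝ), ∃ η₀ ∈ Set.Ioo (0 : ℝ) 1, ∀ η ∈ Set.Ioo (0 : ℝ) η₀,
      (∀ l : ℕ, 1 ≤ l → ∀ ω : ℝ, 0 ≤ ω → ω < alphadot b l →
        (lam r η) ^ 2 / 2 * max (nSig r b l ω) (nSigCheck r b l ω) - C
          ≤ ElogN η (nuD r b η) (lam r η * (alphaD b l + ω)) (vv r))
      ∧ (∀ θ : ℝ, 0 ≤ θ → θ < lam r η →
          0 ≤ ElogN η (nuD r b η) θ (vv r)) := by
  obtain ⟨hb0, hb1⟩ := hb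
  obtain ⟨c₀, hc₀, hc₀_le⟩ := exists_pos_le_cD hr hb0
  refine ⟨1 + |Real.log c₀|, by positivity, 1 / 2, ⟨by norm_num, by norm_num⟩,
    fun η hη => ?_⟩
  have hη1 : η < 1 := by linarith [hη.2]
  refine ⟨fun l hl ω _ _ => ?_, fun θ _ _ => ElogN_nonneg hη.1.le hη1.le _ _ _⟩
  have hc := hc₀_le η hη
  have hlog : -(1 + |Real.log c₀|) ≤ Real.log (cD r b η) := by
    linarith [neg_abs_le (Real.log c₀), Real.log_le_log hc₀ hc]
  have hn := ElogN_nuD_ge hr hb0 hb1 hη.1 hη1 (hc₀.trans_le hc) hl (alphaD b l + ω)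
  have hň := ElogN_nuD_ge hr hb0 hb1 hη.1 hη1 (hc₀.trans_le hc) (Nat.le_succ_of_le hl)
    (alphaD b l + ω)
  rw [← nSig_eq_atomRate] at hn
  rw [← nSigCheck_eq_atomRate] at hň
  rcases max_cases (nSig r b l ω) (nSigCheck r b l ω) with ⟨hmax, _⟩ | ⟨hmax, _⟩ <;>
    rw [hmax] <;> linarith

end
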